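/- Let Ω be a Hausdorff space with Borel σ-algebra 𝓕 and let φ : B_b → ℝ be a real-valued increasing convex functional on the space B_b of bounded Borel measurable functions f : Ω → ℝ such that for every constant M ≥ 1 there exists a sequence (K_n) of compact subsets of Ω with φ(M 1_{K_n^c}) → φ(0). Then the restriction of φ to the space C_b of bounded continuous functions satisfies φ(f) = max_{μ ∈ ca⁺(C_b)} (⟨f,μ⟩ − φ*_{C_b}(μ)) for all f ∈ C_b, where the supremum is attained. -/

import Mathlib

open MeasureTheory Filter Topology Set

variable {Ω : Type*} [TopologicalSpace Ω] [MeasurableSpace Ω] [BorelSpace Ω]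

/-- Bounded Borel measurable real-valued functions. -/
def Bb (Ω : Type*) [TopologicalSpace Ω] [MeasurableSpace Ω] : Set (Ω → ℝ) :=
  {f | Measurable f ∧ ∃ M : ℝ, ∀ ω, |f ω| ≤ M}

/-- Bounded continuous real-valued functions. -/
def Cb (Ω : Type*) [TopologicalSpace Ω] : Set (Ω → ℝ) :=
  {f | Continuous f ∧ ∃ M : ℝ, ∀ ω, |f ω| ≤ M}

/-- The σ-algebra σ(X) generated by a family X of real-valued functions on Ω. -/
def sigmaGen {Ω : Type*} (X : Set (Ω → ℝ)) : MeasurableSpace Ω :=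
  ⨆ f ∈ X, MeasurableSpace.comap f inferInstance

/-- ca⁺(C_b): countably additive nonnegative measures on σ(C_b) integrating every
nonnegative element of C_b finitely (equivalently, all finite measures on σ(C_b)). -/
def caPosCb (Ω : Type*) [TopologicalSpace Ω] : Set (@Measure Ω (sigmaGen (Cb Ω))) :=
  {μ | ∀ f ∈ Cb Ω, (∀ ω, 0 ≤ f ω) → (∫⁻ ω, ENNReal.ofReal (f ω) ∂μ) < ⊤}

/-- The convex conjugate φ*_{C_b} of a real-valued functional. -/
noncomputable def conjCb (φ : (Ω → ℝ) → ℝ) (μ : @Measure Ω (sigmaGen (Cb Ω))) : EReal :=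
  ⨆ f ∈ Cb Ω, ((∫ ω, f ω ∂μ : ℝ) : EReal) - ((φ f : ℝ) : EReal)

/-! Since `φ` is convex and monotone it is bounded above near every point of `C_b`, hence
continuous there, and Hahn–Banach gives a positive subgradient `L` of `φ` at `f`. The tightness
condition makes `L` tight: `L h` is small for `0 ≤ h ≤ 1` vanishing on a suitable compact set.
Composing with `Ω → βΩ` turns `L` into a positive functional on `C(βΩ)`, represented by a Riesz
measure on the Stone–Čech compactification; tightness concentrates it on a countable union of
images of compacts of `Ω`, so it pulls back to a finite measure `μ` on `σ(C_b)` with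
`∫ h dμ = L h`. The subgradient inequality says that `f` attains the supremum defining `φ*(μ)`,
i.e. equality in Fenchel–Young. -/

open scoped BoundedContinuousFunction CompactlySupported

theorem MeasureTheory.Measure.exists_map_eq_of_measure_compl_null {α β : Type*}
    [mβ : MeasurableSpace β] {j : α → β} {ν : Measure β} {S : Set β} (hS : MeasurableSet S)
    (hSj : S ⊆ range j) (hν : ν Sᶜ = 0) :
    ∃ μ : Measure[mβ.comap j] α, @Measure.map _ _ (mβ.comap j) _ j μ = ν := by
  let := mβ.comap j
  choose s hs using fun y : S => hSj y.2
  have hs_meas : Measurable s := by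
    rintro _ ⟨B, hB, rfl⟩
    have : s ⁻¹' (j ⁻¹' B) = ((↑) : S → β) ⁻¹' B := by ext y; simp [hs]
    exact this ▸ measurable_subtype_coe hB
  refine ⟨(ν.comap ((↑) : S → β)).map s, ?_⟩
  rw [Measure.map_map (comap_measurable j) hs_meas, show j ∘ s = (↑) from funext hs,
    map_comap_subtype_coe hS, Measure.restrict_eq_self_of_ae_mem (ae_iff.mpr hν)]

section Subgradient

variable {E : Type*} [AddCommGroup E] [Module ℝ E] [TopologicalSpace E]

/-- Separate `(x₀, Φ x₀)` from the open convex strict epigraph of `Φ`. -/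
theorem ConvexOn.exists_subgradient [IsTopologicalAddGroup E] [ContinuousSMul ℝ E]
    {Φ : E → ℝ} (hconv : ConvexOn ℝ univ Φ) (hcont : Continuous Φ) (x₀ : E) :
    ∃ g : StrongDual ℝ E, ∀ x, Φ x₀ + g (x - x₀) ≤ Φ x := by
  have hopen : IsOpen {p : E × ℝ | Φ p.1 < p.2} :=
    isOpen_lt (hcont.comp continuous_fst) continuous_snd
  have hconvex : Convex ℝ {p : E × ℝ | Φ p.1 < p.2} := by
    simpa using hconv.convex_strict_epigraph
  obtain ⟨ℓ, hℓ⟩ := geometric_hahn_banach_open_point hconvex hopen (x := (x₀, Φ x₀))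
    (lt_irrefl (Φ x₀) :)
  have hsplit : ∀ x t, ℓ (x, t) = ℓ (x, 0) + t * ℓ (0, 1) := fun x t => by
    rw [← smul_eq_mul, ← ℓ.map_smul, ← map_add]; simp
  have hc : 0 < -ℓ (0, 1) := by
    have := hℓ (x₀, Φ x₀ + 1) (by simp)
    rw [hsplit _ (Φ x₀ + 1), hsplit _ (Φ x₀)] at this
    linarith
  refine ⟨(-ℓ (0, 1))⁻¹ • ℓ.comp (ContinuousLinearMap.inl ℝ E ℝ), fun x => ?_⟩
  refine le_of_forall_gt_imp_ge_of_dense fun t ht => ?_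
  have := hℓ (x, t) ht
  rw [hsplit x t, hsplit x₀ (Φ x₀)] at this
  have hlin : ℓ (x - x₀, 0) = ℓ (x, 0) - ℓ (x₀, 0) := by rw [← map_sub]; simp
  simp only [FunLike.coe_smul, ContinuousLinearMap.coe_comp, Pi.smul_apply,
    Function.comp_apply, ContinuousLinearMap.inl_apply, smul_eq_mul, hlin]
  rw [← le_sub_iff_add_le', inv_mul_le_iff₀ hc]
  linarith

theorem Monotone.subgradient_nonneg [PartialOrder E] [IsOrderedAddMonoid E] {Φ : E → ℝ}
    (hmono : Monotone Φ) {x₀ : E} {g : StrongDual ℝ E} (hg : ∀ x, Φ x₀ + g (x - x₀) ≤ Φ x)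
    {h : E} (hh : 0 ≤ h) : 0 ≤ g h := by
  have h₁ := hg (x₀ - h)
  have h₂ := hmono (sub_le_self x₀ hh)
  simp only [sub_sub_cancel_left, map_neg] at h₁
  linarith

end Subgradient

namespace BoundedContinuousFunction

variable {α : Type*} [TopologicalSpace α]

theorem continuous_of_convexOn_of_monotone {Φ : (α →ᵇ ℝ) → ℝ} (hconv : ConvexOn ℝ univ Φ)
    (hmono : Monotone Φ) : Continuous Φ := by
  have hbdd : IsBoundedUnder (· ≤ ·) (𝓝 0) Φ := by
    refine ⟨Φ 1, eventually_map.mpr ?_⟩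
    filter_upwards [Metric.ball_mem_nhds (0 : α →ᵇ ℝ) one_pos] with h hh
    refine hmono fun x => ?_
    have := (norm_coe_le_norm h x).trans (mem_ball_zero_iff.mp hh).le
    simpa using (le_abs_self (h x)).trans this
  have tfae := (hconv.continuousOn_tfae isOpen_univ univ_nonempty).out 3 1
  exact continuousOn_univ.mp (tfae.mp ⟨0, mem_univ 0, hbdd⟩)

theorem exists_extend_stoneCech (h : α →ᵇ ℝ) :
    ∃ H : C(StoneCech α, ℝ), ∀ x, H (stoneCechUnit x) = h x := by
  let h' : α → Icc (-‖h‖) ‖h‖ := fun x => ⟨h x, abs_le.mp (by simpa using h.norm_coe_le_norm x)⟩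
  have hh' : Continuous h' := by fun_prop
  exact ⟨⟨_, continuous_subtype_val.comp (continuous_stoneCechExtend hh')⟩,
    fun x => congrArg Subtype.val (stoneCechExtend_stoneCechUnit hh' x)⟩

def IsTightFunctional (g : (α →ᵇ ℝ) → ℝ) : Prop :=
  ∀ ε > 0, ∃ K, IsCompact K ∧ ∀ h : α →ᵇ ℝ, 0 ≤ h → h ≤ 1 → EqOn h 0 K → g h ≤ ε

variable {T : Type*} [TopologicalSpace T] [CompactSpace T]

noncomputable def ccCompContinuous (j : C(α, T)) : C_c(T, ℝ) →ₗ[ℝ] α →ᵇ ℝ where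
  toFun F := (mkOfCompact F.toContinuousMap).compContinuous j
  map_add' _ _ := rfl
  map_smul' _ _ := rfl

noncomputable def pullbackFunctional (j : C(α, T)) (g : StrongDual ℝ (α →ᵇ ℝ))
    (hg : ∀ h, 0 ≤ h → 0 ≤ g h) : C_c(T, ℝ) →ₚ[ℝ] ℝ :=
  .mk₀ (g.toLinearMap ∘ₗ ccCompContinuous j) fun _ hF => hg _ fun x => hF (j x)

variable [T2Space T] [MeasurableSpace T] [BorelSpace T]

theorem rieszMeasure_compl_image_le (j : C(α, T)) (g : StrongDual ℝ (α →ᵇ ℝ))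
    (hg : ∀ h, 0 ≤ h → 0 ≤ g h) {K : Set α} (hK : IsCompact K) {ε : ℝ}
    (hKε : ∀ h : α →ᵇ ℝ, 0 ≤ h → h ≤ 1 → EqOn h 0 K → g h ≤ ε) :
    RealRMK.rieszMeasure (pullbackFunctional j g hg) (j '' K)ᶜ ≤ ENNReal.ofReal ε := by
  have hjK : IsClosed (j '' K) := (hK.image j.continuous).isClosed
  rw [hjK.isOpen_compl.measure_eq_iSup_isCompact]
  refine iSup₂_le fun C hC => iSup_le fun hCc => ?_
  obtain ⟨u, hu0, hu1, hu01⟩ := exists_continuous_zero_one_of_isClosed hjK hCc.isClosed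
    (subset_compl_iff_disjoint_right.mp hC).symm
  let F := CompactlySupportedContinuousMap.continuousMapEquiv u
  refine (RealRMK.rieszMeasure_le_of_eq_one _ (f := F) (fun x => (hu01 x).1) hCc
    fun x hx => hu1 hx).trans (ENNReal.ofReal_le_ofReal ?_)
  exact hKε (ccCompContinuous j F) (fun x => (hu01 _).1) (fun x => (hu01 _).2)
    fun x hx => hu0 (mem_image_of_mem j hx)

/-- Riesz–Markov–Kakutani on the compactification `T`; tightness makes the Riesz measure live
on the σ-compact set `⋃ j '' Kₙ ⊆ range j`, so it can be pulled back to `α`. -/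
theorem IsTightFunctional.exists_measure_integral_eq (j : C(α, T))
    (hj : ∀ h : α →ᵇ ℝ, ∃ H : C(T, ℝ), ∀ x, H (j x) = h x) (g : StrongDual ℝ (α →ᵇ ℝ))
    (hg : ∀ h, 0 ≤ h → 0 ≤ g h) (htight : IsTightFunctional g) :
    ∃ μ : Measure[MeasurableSpace.comap j ‹_›] α, IsFiniteMeasure μ ∧
      ∀ h : α →ᵇ ℝ, ∫ x, h x ∂μ = g h := by
  let ν := RealRMK.rieszMeasure (pullbackFunctional j g hg)
  choose K hKc hKε using fun n : ℕ => htight (1 / (n + 1)) Nat.one_div_pos_of_nat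
  let S := ⋃ n, j '' K n
  have hS : MeasurableSet S :=
    .iUnion fun n => ((hKc n).image j.continuous).isClosed.measurableSet
  have hνS : ν Sᶜ = 0 := by
    have hlim : Tendsto (fun n : ℕ => ENNReal.ofReal (1 / (n + 1))) atTop (𝓝 0) := by
      simpa using ENNReal.tendsto_ofReal tendsto_one_div_add_atTop_nhds_zero_nat
    refine le_antisymm (ge_of_tendsto' hlim fun n => ?_) zero_le
    exact (measure_mono (compl_subset_compl.mpr (subset_iUnion _ n))).trans
      (rieszMeasure_compl_image_le j g hg (hKc n) (hKε n))
  obtain ⟨μ, hμ⟩ := Measure.exists_map_eq_of_measure_compl_null hS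
    (iUnion_subset fun n => image_subset_range _ _) hνS
  let := MeasurableSpace.comap j ‹MeasurableSpace T›
  have hjm : Measurable j := comap_measurable j
  refine ⟨μ, ⟨?_⟩, fun h => ?_⟩
  · rw [← preimage_univ (f := j), ← Measure.map_apply hjm MeasurableSet.univ, hμ]
    exact measure_lt_top ν univ
  obtain ⟨H, hH⟩ := hj h
  calc ∫ x, h x ∂μ = ∫ x, H (j x) ∂μ := by simp only [hH]
    _ = ∫ y, H y ∂ν := by
      rw [← hμ, integral_map hjm.aemeasurable H.continuous.aestronglyMeasurable]
    _ = ∫ y, CompactlySupportedContinuousMap.continuousMapEquiv H y ∂ν := rfl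
    _ = g h := by
      rw [RealRMK.integral_rieszMeasure]
      exact congrArg g (ext hH)

end BoundedContinuousFunction

theorem measurable_sigmaGen_of_mem {X : Type*} {Y : Set (X → ℝ)} {f : X → ℝ} (hf : f ∈ Y) :
    Measurable[sigmaGen Y] f :=
  Measurable.of_comap_le (le_iSup₂ (f := fun f _ => MeasurableSpace.comap f _) f hf)

theorem sigmaGen_le_of_forall_measurable {X : Type*} {m : MeasurableSpace X} {Y : Set (X → ℝ)}
    (h : ∀ f ∈ Y, Measurable f) : sigmaGen Y ≤ m :=
  iSup₂_le fun f hf => (h f hf).comap_le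

section FunctionSpaces

variable {X : Type*} [TopologicalSpace X]

theorem Bb.add_mem [MeasurableSpace X] {f g : X → ℝ} (hf : f ∈ Bb X) (hg : g ∈ Bb X) :
    f + g ∈ Bb X := by
  obtain ⟨hfm, M, hM⟩ := hf
  obtain ⟨hgm, N, hN⟩ := hg
  exact ⟨hfm.add hgm, M + N, fun x => (abs_add_le _ _).trans (add_le_add (hM x) (hN x))⟩

theorem Bb.smul_mem [MeasurableSpace X] (c : ℝ) {f : X → ℝ} (hf : f ∈ Bb X) : c • f ∈ Bb X := by
  obtain ⟨hfm, M, hM⟩ := hf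
  refine ⟨hfm.const_smul c, |c| * M, fun x => ?_⟩
  rw [Pi.smul_apply, smul_eq_mul, abs_mul]
  exact mul_le_mul_of_nonneg_left (hM x) (abs_nonneg c)

theorem BoundedContinuousFunction.coe_mem_Bb [MeasurableSpace X] [OpensMeasurableSpace X]
    (h : X →ᵇ ℝ) : ⇑h ∈ Bb X :=
  ⟨h.continuous.measurable, ‖h‖, fun x => by simpa using h.norm_coe_le_norm x⟩

theorem const_mul_indicator_mem_Bb [MeasurableSpace X] {A : Set X} (hA : MeasurableSet A)
    (M : ℝ) : (fun x => M * A.indicator (fun _ => (1 : ℝ)) x) ∈ Bb X := by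
  refine ⟨(measurable_const.indicator hA).const_mul M, |M|, fun x => ?_⟩
  by_cases hx : x ∈ A <;> simp [hx]

noncomputable def Cb.toBCF {f : X → ℝ} (hf : f ∈ Cb X) : X →ᵇ ℝ :=
  .ofNormedAddCommGroup f hf.1 hf.2.choose fun x => by simpa using hf.2.choose_spec x

@[simp]
lemma Cb.coe_toBCF {f : X → ℝ} (hf : f ∈ Cb X) : ⇑(Cb.toBCF hf) = f := rfl

theorem mem_caPosCb_of_isFiniteMeasure (μ : Measure[sigmaGen (Cb X)] X) [IsFiniteMeasure μ] :
    μ ∈ caPosCb X := fun _ hf _ =>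
  (Integrable.of_bound (measurable_sigmaGen_of_mem hf).aestronglyMeasurable _
    (ae_of_all _ (Cb.toBCF hf).norm_coe_le_norm)).lintegral_lt_top

end FunctionSpaces

section Functional

variable {φ : (Ω → ℝ) → ℝ}
  (hmono : ∀ f ∈ Bb Ω, ∀ g ∈ Bb Ω, (∀ ω, g ω ≤ f ω) → φ g ≤ φ f)
  (hconv : ∀ f ∈ Bb Ω, ∀ g ∈ Bb Ω, ∀ a b : ℝ, 0 ≤ a → 0 ≤ b → a + b = 1 →
    φ (a • f + b • g) ≤ a * φ f + b * φ g)
  (htight : ∀ M : ℝ, 1 ≤ M → ∃ K : ℕ → Set Ω, (∀ n, IsCompact (K n)) ∧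
    Tendsto (fun n => φ (fun ω => M * (K n)ᶜ.indicator (fun _ => (1 : ℝ)) ω))
      atTop (𝓝 (φ 0)))

include hmono in
theorem monotone_bcf_of_Bb : Monotone fun h : Ω →ᵇ ℝ => φ h :=
  fun h₁ h₂ h => hmono _ h₂.coe_mem_Bb _ h₁.coe_mem_Bb h

include hconv in
theorem convexOn_bcf_of_Bb : ConvexOn ℝ univ fun h : Ω →ᵇ ℝ => φ h :=
  ⟨convex_univ, fun x _ y _ a b ha hb hab => by
    simp only [smul_eq_mul, BoundedContinuousFunction.coe_add, BoundedContinuousFunction.coe_smul]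
    exact hconv _ x.coe_mem_Bb _ y.coe_mem_Bb a b ha hb hab⟩

include hmono hconv htight in
/-- Take `K` with `φ (2n 1_{Kᶜ}) < φ 0 + 1`. For `0 ≤ h ≤ 1` vanishing on `K`,
`f₀ + n h ≤ (2 f₀ + 2n 1_{Kᶜ}) / 2`, so convexity bounds `n g h ≤ φ (f₀ + n h) - φ f₀` by a
constant `A` independent of `n`. -/
theorem isTightFunctional_of_subgradient [T2Space Ω] {f₀ : Ω →ᵇ ℝ}
    {g : StrongDual ℝ (Ω →ᵇ ℝ)} (hg : ∀ h : Ω →ᵇ ℝ, φ f₀ + g (h - f₀) ≤ φ h) :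
    BoundedContinuousFunction.IsTightFunctional g := by
  intro ε hε
  set A := (φ ⇑((2 : ℝ) • f₀) + (φ 0 + 1)) / 2 - φ f₀ with hA
  obtain ⟨n, hn⟩ := exists_nat_gt (max (A / ε) 1)
  have hn1 : (1 : ℝ) ≤ n := (le_max_right _ _).trans hn.le
  have hAn : A < n * ε := (div_lt_iff₀ hε).mp ((le_max_left _ _).trans_lt hn)
  obtain ⟨K, hKc, hK⟩ := htight (2 * n) (by linarith)
  obtain ⟨m, hm⟩ := (hK.eventually (gt_mem_nhds (lt_add_one (φ 0)))).exists
  refine ⟨K m, hKc m, fun h h0 h1 hKh => ?_⟩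
  set ind := fun ω => (2 * n : ℝ) * (K m)ᶜ.indicator (fun _ => (1 : ℝ)) ω
  have hind : ind ∈ Bb Ω :=
    const_mul_indicator_mem_Bb (hKc m).isClosed.measurableSet.compl _
  have h2f₀ := ((2 : ℝ) • f₀).coe_mem_Bb
  have hle : ∀ ω, (f₀ + (n : ℝ) • h) ω ≤ ((1 / 2 : ℝ) • ⇑((2 : ℝ) • f₀) + (1 / 2 : ℝ) • ind) ω := by
    intro ω
    by_cases hω : ω ∈ K m
    · simp [ind, hω, hKh hω]
    · have : h ω ≤ 1 := h1 ω
      simp [ind, hω]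
      nlinarith
  have hbound : n * g h ≤ A := calc
    n * g h = g ((f₀ + (n : ℝ) • h) - f₀) := by simp
    _ ≤ φ ⇑(f₀ + (n : ℝ) • h) - φ f₀ := by linarith [hg (f₀ + (n : ℝ) • h)]
    _ ≤ φ ((1 / 2 : ℝ) • ⇑((2 : ℝ) • f₀) + (1 / 2 : ℝ) • ind) - φ f₀ := by
      gcongr
      exact hmono _ (Bb.add_mem (Bb.smul_mem _ h2f₀) (Bb.smul_mem _ hind)) _
        (f₀ + (n : ℝ) • h).coe_mem_Bb hle
    _ ≤ A := by
      linarith [hconv _ h2f₀ _ hind (1 / 2) (1 / 2) (by norm_num) (by norm_num) (by norm_num)]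
  exact ((mul_lt_mul_iff_right₀ (by positivity)).mp (hbound.trans_lt hAn)).le

include hmono hconv htight in
theorem exists_mem_caPosCb_subgradient [T2Space Ω] {f : Ω → ℝ} (hf : f ∈ Cb Ω) :
    ∃ μ ∈ caPosCb Ω, ∀ g ∈ Cb Ω, ∫ ω, g ω ∂μ - φ g ≤ ∫ ω, f ω ∂μ - φ f := by
  obtain ⟨L, hL⟩ := (convexOn_bcf_of_Bb hconv).exists_subgradient
    (BoundedContinuousFunction.continuous_of_convexOn_of_monotone (convexOn_bcf_of_Bb hconv)
      (monotone_bcf_of_Bb hmono)) (Cb.toBCF hf)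
  let : MeasurableSpace (StoneCech Ω) := borel _
  have : BorelSpace (StoneCech Ω) := ⟨rfl⟩
  obtain ⟨μ, hμfin, hμ⟩ :=
    (isTightFunctional_of_subgradient hmono hconv htight hL).exists_measure_integral_eq
      ⟨stoneCechUnit, continuous_stoneCechUnit⟩
      BoundedContinuousFunction.exists_extend_stoneCech L
      fun _ => (monotone_bcf_of_Bb hmono).subgradient_nonneg hL
  have hle : sigmaGen (Cb Ω) ≤ MeasurableSpace.comap stoneCechUnit ‹_› := by
    refine sigmaGen_le_of_forall_measurable fun g hg => ?_
    obtain ⟨H, hH⟩ := BoundedContinuousFunction.exists_extend_stoneCech (Cb.toBCF hg)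
    rw [show g = H ∘ stoneCechUnit from funext fun x => (hH x).symm]
    exact H.continuous.measurable.comp (comap_measurable _)
  have hint : ∀ g (hg : g ∈ Cb Ω), ∫ ω, g ω ∂(μ.trim hle) = L (Cb.toBCF hg) := fun g hg => by
    rw [← integral_trim hle (measurable_sigmaGen_of_mem hg).stronglyMeasurable, ← hμ]
    rfl
  refine ⟨μ.trim hle, mem_caPosCb_of_isFiniteMeasure _, fun g hg => ?_⟩
  have := hL (Cb.toBCF hg)
  rw [hint g hg, hint f hf, map_sub] at *
  simp only [Cb.coe_toBCF] at this
  linarith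

end Functional

section Conjugate

variable {X : Type*} [TopologicalSpace X]

theorem le_conjCb (φ : (X → ℝ) → ℝ) (μ : Measure[sigmaGen (Cb X)] X) {f : X → ℝ}
    (hf : f ∈ Cb X) : ((∫ ω, f ω ∂μ : ℝ) : EReal) - (φ f : EReal) ≤ conjCb φ μ :=
  le_iSup₂ (f := fun f _ => ((∫ ω, f ω ∂μ : ℝ) : EReal) - (φ f : EReal)) f hf

theorem conjCb_eq_of_forall_le {φ : (X → ℝ) → ℝ} {μ : Measure[sigmaGen (Cb X)] X} {f : X → ℝ}
    (hf : f ∈ Cb X) (hmax : ∀ g ∈ Cb X, ∫ ω, g ω ∂μ - φ g ≤ ∫ ω, f ω ∂μ - φ f) :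
    conjCb φ μ = ((∫ ω, f ω ∂μ - φ f : ℝ) : EReal) := by
  refine le_antisymm (iSup₂_le fun g hg => ?_) (le_conjCb φ μ hf)
  exact_mod_cast hmax g hg

end Conjugate

/-- Example 1.8.1, representation under the tightness condition (11): a real-valued
increasing convex functional φ on B_b such that for every M ≥ 1 there are compacts K_n
with φ(M 1_{K_n^c}) → φ(0), restricted to C_b, admits a max-representation over ca⁺(C_b). -/
theorem stmt18 [T2Space Ω] (φ : (Ω → ℝ) → ℝ)
    (hmono : ∀ f ∈ Bb Ω, ∀ g ∈ Bb Ω, (∀ ω, g ω ≤ f ω) → φ g ≤ φ f)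
    (hconv : ∀ f ∈ Bb Ω, ∀ g ∈ Bb Ω, ∀ a b : ℝ, 0 ≤ a → 0 ≤ b → a + b = 1 →
      φ (a • f + b • g) ≤ a * φ f + b * φ g)
    (htight : ∀ M : ℝ, 1 ≤ M → ∃ K : ℕ → Set Ω, (∀ n, IsCompact (K n)) ∧
      Tendsto (fun n => φ (fun ω => M * (K n)ᶜ.indicator (fun _ => (1 : ℝ)) ω))
        atTop (𝓝 (φ 0))) :
    ∀ f ∈ Cb Ω,
      (∃ μ ∈ caPosCb Ω,
        ((φ f : ℝ) : EReal) = ((∫ ω, f ω ∂μ : ℝ) : EReal) - conjCb φ μ) ∧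
      (∀ μ ∈ caPosCb Ω,
        ((∫ ω, f ω ∂μ : ℝ) : EReal) - conjCb φ μ ≤ ((φ f : ℝ) : EReal)) := by
  intro f hf
  obtain ⟨μ, hμ, hmax⟩ := exists_mem_caPosCb_subgradient hmono hconv htight hf
  refine ⟨⟨μ, hμ, ?_⟩, fun ν _ => ?_⟩
  · rw [conjCb_eq_of_forall_le hf hmax, ← EReal.coe_sub]
    norm_num
  · calc ((∫ ω, f ω ∂ν : ℝ) : EReal) - conjCb φ ν
        ≤ ((∫ ω, f ω ∂ν : ℝ) : EReal) - ((∫ ω, f ω ∂ν : ℝ) - φ f : ℝ) :=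
          EReal.sub_le_sub le_rfl (by exact_mod_cast le_conjCb φ ν hf)
      _ = φ f := by rw [← EReal.coe_sub]; norm_num
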